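/- For each positive integer n, s(n) = 3n + 2·σ(n), where σ(n) denotes the sum of the digits in the M-expansion of n. -/

import Mathlib

/-!
Since `A_{k+1} = A_k A_k 1`, the terms of `a` at positions `M_{k+1} + 1, …, 2M_{k+1}` repeat
those at positions `1, …, M_{k+1}`, and the term at position `M_{k+2}` is `1`. Hence
`s(M_ℓ + r) = s(M_ℓ) + s(r)` for `r ≤ M_ℓ`, and induction on `ℓ` gives `s(M_ℓ) = 3M_ℓ + 2`.
The greedy expansion writes `n = M_ℓ + r` with `r ≤ M_ℓ`, so peeling off its leading term adds
`3M_ℓ + 2` to `s` and `1` to `σ`; when `r = M_ℓ` this happens twice and the expansion ends.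
-/

/-- `Alist k` is the list `A_{k+1}`: `A_1 = [5]`, `A_{k+1} = A_k ++ A_k ++ [1]`. -/
def Alist : ℕ → List ℕ
  | 0 => [5]
  | k+1 => Alist k ++ Alist k ++ [1]

/-- `aseq n` is the `n`-th term (1-indexed) of the limit of the lists `A_k`;
`aseq 0 = 0` by convention. -/
def aseq (n : ℕ) : ℕ := (Alist n).getD (n - 1) 0

/-- Partial sums: `s n = a_1 + ⋯ + a_n`, `s 0 = 0`. -/
def s (n : ℕ) : ℕ := ∑ i ∈ Finset.Icc 1 n, aseq i

/-- The largest `ℓ` with `2^ℓ - 1 ≤ n` (for `n ≥ 1`). -/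
def maxM (n : ℕ) : ℕ := Nat.findGreatest (fun ℓ => 2 ^ ℓ - 1 ≤ n) n

/-- `Mdig n i` is the digit `ε_i` in the greedy M-expansion
`n = ε_1·M_1 + ⋯ + ε_ℓ·M_ℓ` (with `M_i = 2^i - 1`): repeatedly subtract the
largest Mersenne number `M_ℓ ≤ n`, recording a digit `2` if the remainder
equals `M_ℓ` again. -/
def Mdig (n : ℕ) : ℕ → ℕ :=
  if h : n = 0 then fun _ => 0
  else
    let ℓ := maxM n
    let r := n - (2 ^ ℓ - 1)
    if r = 2 ^ ℓ - 1 then fun i => if i = ℓ then 2 else 0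
    else fun i => (if i = ℓ then 1 else 0) + Mdig r i
termination_by n
decreasing_by
  have h1 : 1 ≤ maxM n :=
    Nat.le_findGreatest (Nat.one_le_iff_ne_zero.mpr h) (by simpa using Nat.one_le_iff_ne_zero.mpr h)
  have h2 : 2 ≤ 2 ^ maxM n := by
    calc (2 : ℕ) = 2 ^ 1 := rfl
    _ ≤ 2 ^ maxM n := Nat.pow_le_pow_right (by norm_num) h1
  have h3 : 1 ≤ n := Nat.one_le_iff_ne_zero.mpr h
  omega

/-- Sum of the M-digits of `n` (all nonzero digits have index `≤ n`). -/
def sigmaM (n : ℕ) : ℕ := ∑ i ∈ Finset.Icc 1 n, Mdig n i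

open Finset

lemma length_Alist (k : ℕ) : (Alist k).length = mersenne (k + 1) := by
  induction k with
  | zero => rfl
  | succ k ih =>
    simp only [Alist, List.length_append, List.length_singleton, ih, mersenne_succ (k + 1)]
    ring

lemma Alist_prefix_Alist {k m : ℕ} (h : k ≤ m) : Alist k <+: Alist m := by
  induction h with
  | refl => exact List.prefix_refl _
  | step _ ih => exact ih.trans ((List.prefix_append _ _).trans (List.prefix_append _ _))

lemma getD_Alist_of_le {k m i : ℕ} (h : k ≤ m) (hi : i < mersenne (k + 1)) :
    (Alist m).getD i 0 = (Alist k).getD i 0 := by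
  obtain ⟨t, ht⟩ := Alist_prefix_Alist h
  rw [← ht, List.getD_append _ _ _ _ (by rwa [length_Alist])]

lemma aseq_eq_getD_Alist {k n : ℕ} (h1 : 1 ≤ n) (h2 : n ≤ mersenne (k + 1)) :
    aseq n = (Alist k).getD (n - 1) 0 := by
  rcases le_total k n with h | h
  · exact getD_Alist_of_le h (by omega)
  · refine (getD_Alist_of_le h ?_).symm
    have := (n + 1).lt_two_pow_self
    unfold mersenne
    omega

lemma aseq_mersenne_add {k i : ℕ} (h1 : 1 ≤ i) (h2 : i ≤ mersenne (k + 1)) :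
    aseq (mersenne (k + 1) + i) = aseq i := by
  have hlen := length_Alist k
  rw [aseq_eq_getD_Alist (k := k + 1) (by omega) (by rw [mersenne_succ (k + 1)]; omega),
    aseq_eq_getD_Alist h1 h2, Alist, List.getD_append _ _ _ _ (by simp; omega),
    List.getD_append_right _ _ _ _ (by omega)]
  congr 1
  omega

lemma aseq_mersenne (k : ℕ) : aseq (mersenne (k + 2)) = 1 := by
  have hlen := length_Alist k
  have hM := mersenne_succ (k + 1)
  rw [aseq_eq_getD_Alist (k := k + 1) (by omega) le_rfl, Alist,
    List.getD_append_right _ _ _ _ (by simp; omega)]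
  simp [hlen, hM, ← two_mul]

lemma s_eq_sum_range (n : ℕ) : s n = ∑ i ∈ range n, aseq (i + 1) := by
  induction n with
  | zero => rfl
  | succ n ih => rw [s, sum_Icc_succ_top (by omega), ← s, ih, sum_range_succ]

lemma s_mersenne_add {k r : ℕ} (hr : r ≤ mersenne (k + 1)) :
    s (mersenne (k + 1) + r) = s (mersenne (k + 1)) + s r := by
  simp only [s_eq_sum_range, sum_range_add]
  congr 1
  refine sum_congr rfl fun i hi => ?_
  rw [add_assoc, aseq_mersenne_add (by omega) (by simp at hi; omega)]

lemma s_mersenne (k : ℕ) : s (mersenne (k + 1)) = 3 * mersenne (k + 1) + 2 := by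
  induction k with
  | zero => rfl
  | succ k ih =>
    have hM := mersenne_succ (k + 1)
    rw [hM, s_eq_sum_range, sum_range_succ, ← s_eq_sum_range, ← hM, aseq_mersenne, two_mul,
      s_mersenne_add le_rfl, ih]
    omega

-- `mersenne ℓ` unfolds to `2 ^ ℓ - 1`, the form in which `maxM` and `Mdig` are written.
lemma maxM_pos {n : ℕ} (hn : 0 < n) : 0 < maxM n :=
  Nat.le_findGreatest hn (by simp; omega)

lemma mersenne_maxM_le (n : ℕ) : mersenne (maxM n) ≤ n :=
  Nat.findGreatest_spec (P := fun ℓ => 2 ^ ℓ - 1 ≤ n) (Nat.zero_le n) (by simp)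

lemma lt_mersenne_maxM_succ (n : ℕ) : n < mersenne (maxM n + 1) := by
  by_cases h : maxM n + 1 ≤ n
  · exact not_le.mp <|
      Nat.findGreatest_is_greatest (P := fun ℓ => 2 ^ ℓ - 1 ≤ n) (Nat.lt_succ_self _) h
  · have := (n + 1).lt_two_pow_self
    have : 2 ^ (n + 1) ≤ 2 ^ (maxM n + 1) := Nat.pow_le_pow_right (by norm_num) (by omega)
    unfold mersenne
    omega

lemma Mdig_zero : Mdig 0 = fun _ => 0 := by
  rw [Mdig, dif_pos rfl]

lemma Mdig_of_sub_eq {n : ℕ} (hn : 0 < n) (h : n - mersenne (maxM n) = mersenne (maxM n)) :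
    Mdig n = fun i => if i = maxM n then 2 else 0 := by
  rw [Mdig, dif_neg hn.ne']
  exact if_pos h

lemma Mdig_of_sub_ne {n : ℕ} (hn : 0 < n) (h : n - mersenne (maxM n) ≠ mersenne (maxM n)) :
    Mdig n = fun i => (if i = maxM n then 1 else 0) + Mdig (n - mersenne (maxM n)) i := by
  rw [Mdig, dif_neg hn.ne']
  exact if_neg h

lemma Mdig_eq_zero_of_lt {n i : ℕ} (h : n < i) : Mdig n i = 0 := by
  induction n using Nat.strong_induction_on with
  | _ n ih =>
    rcases Nat.eq_zero_or_pos n with rfl | hn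
    · rw [Mdig_zero]
    have hne : i ≠ maxM n := (Nat.findGreatest_le n).trans_lt h |>.ne'
    have hpos : 0 < mersenne (maxM n) := mersenne_pos.mpr (maxM_pos hn)
    by_cases hr : n - mersenne (maxM n) = mersenne (maxM n)
    · simp [Mdig_of_sub_eq hn hr, hne]
    · simp only [Mdig_of_sub_ne hn hr, if_neg hne, zero_add]
      exact ih _ (by omega) (by omega)

lemma sigmaM_eq_sum_of_le {n m : ℕ} (h : n ≤ m) : sigmaM n = ∑ i ∈ Icc 1 m, Mdig n i :=
  sum_subset (Icc_subset_Icc_right h) fun i hi hni => Mdig_eq_zero_of_lt (by simp_all)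

lemma maxM_mem_Icc {n : ℕ} (hn : 0 < n) : maxM n ∈ Icc 1 n :=
  mem_Icc.mpr ⟨maxM_pos hn, Nat.findGreatest_le n⟩

lemma sigmaM_of_sub_eq {n : ℕ} (hn : 0 < n) (h : n - mersenne (maxM n) = mersenne (maxM n)) :
    sigmaM n = 2 := by
  rw [sigmaM, Mdig_of_sub_eq hn h, sum_ite_eq', if_pos (maxM_mem_Icc hn)]

lemma sigmaM_of_sub_ne {n : ℕ} (hn : 0 < n) (h : n - mersenne (maxM n) ≠ mersenne (maxM n)) :
    sigmaM n = 1 + sigmaM (n - mersenne (maxM n)) := by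
  rw [sigmaM, Mdig_of_sub_ne hn h, sum_add_distrib, sum_ite_eq', if_pos (maxM_mem_Icc hn),
    sigmaM_eq_sum_of_le (Nat.sub_le _ _)]

theorem s_eq_three_n_add_two_sigma_general (n : ℕ) :
    s n = 3 * n + 2 * sigmaM n := by
  induction n using Nat.strong_induction_on with
  | _ n ih =>
  rcases Nat.eq_zero_or_pos n with rfl | hn
  · rfl
  obtain ⟨k, hk⟩ := Nat.exists_eq_add_one_of_ne_zero (maxM_pos hn).ne'
  have hlt : n < 2 * mersenne (k + 1) + 1 := by
    rw [← mersenne_succ, ← hk]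
    exact lt_mersenne_maxM_succ n
  obtain ⟨r, rfl⟩ := Nat.exists_eq_add_of_le (hk ▸ mersenne_maxM_le n)
  have hs : s (mersenne (k + 1) + r) = 3 * mersenne (k + 1) + 2 + s r := by
    rw [s_mersenne_add (by omega), s_mersenne]
  by_cases hr : r = mersenne (k + 1)
  · rw [hs, sigmaM_of_sub_eq hn (by rw [hk]; omega), hr, s_mersenne]
    omega
  · rw [hs, sigmaM_of_sub_ne hn (by rw [hk]; omega), hk, Nat.add_sub_cancel_left,
      ih r (by simp [mersenne_pos])]
    omega

/-- For each positive integer `n`, `s(n) = 3n + 2·σ(n)`, where `σ(n)` is the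
sum of the digits of the M-expansion of `n`. -/
theorem s_eq_three_n_add_two_sigma (n : ℕ) (hn : 1 ≤ n) :
    s n = 3 * n + 2 * sigmaM n :=
  s_eq_three_n_add_two_sigma_general n
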